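/- arXiv:2412.16026 — 4 statements merged into one kernel-verified Lean document; each statement's English description precedes it below -/
import Mathlib

section
/- With F(x) = (2π)^d (∫_{T^d} dp/(ω(p)+x))^{-1} - x, one has lim_{x→∞} F(x) = (2π)^{-d} ∫_{T^d} ω(p) dp and lim_{x→-∞} F(x) = (2π)^{-d} ∫_{T^d} ω(p) dp. -/
open MeasureTheory Real Filter Topology Set

noncomputable section

instance : Fact (0 < 2 * π) := ⟨by positivity⟩

/-- The d-dimensional torus ℝ^d/(2πℤ)^d, with Lebesgue (Haar) measure of total mass (2π)^d. -/
abbrev Torus (d : ℕ) := Fin d → AddCircle (2 * π)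

lemma torus_volume (d : ℕ) : (volume (univ : Set (Torus d))).toReal = (2 * π) ^ d := by
  rw [volume_pi, Measure.pi_univ]
  simp [AddCircle.measure_univ, ENNReal.toReal_ofReal (by positivity : (0:ℝ) ≤ 2*π),
    ENNReal.toReal_ofReal (by positivity : (0:ℝ) ≤ π)]

lemma torus_integrable (d : ℕ) (f : Torus d → ℝ) (hf : Continuous f) : Integrable f :=
  hf.integrable_of_hasCompactSupport (HasCompactSupport.of_compactSpace f)

lemma aux_tendsto (d : ℕ) (ω : Torus d → ℝ) (hω : Continuous ω)
    (hrange : ∀ p, ω p ∈ Icc (0:ℝ) 1)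
    (l : Filter ℝ) [l.NeBot] [l.IsCountablyGenerated] (C : ℝ)
    (hev : ∀ᶠ x in l, x ≠ 0 ∧ ∀ p, ω p + x ≠ 0 ∧ |x / (ω p + x)| ≤ C)
    (hlim : ∀ c ∈ Icc (0:ℝ) 1, Tendsto (fun x => x / (c + x)) l (𝓝 1)) :
    Tendsto (fun x => (2 * π) ^ d * (∫ p, (ω p + x)⁻¹)⁻¹ - x) l
      (𝓝 (((2 * π) ^ d)⁻¹ * ∫ p, ω p)) := by
  set V : ℝ := (2 * π) ^ d with hVdef
  have hVpos : 0 < V := by positivity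
  set N : ℝ → ℝ := fun x => ∫ p, x * ω p / (ω p + x) with hNdef
  set D : ℝ → ℝ := fun x => ∫ p, x / (ω p + x) with hDdef
  have hmeasN : ∀ x : ℝ, AEStronglyMeasurable (fun p => x * ω p / (ω p + x)) volume :=
    fun x => (((hω.measurable.const_mul x).div (hω.measurable.add_const x))).aestronglyMeasurable
  have hmeasD : ∀ x : ℝ, AEStronglyMeasurable (fun p : Torus d => x / (ω p + x)) volume :=
    fun x => ((measurable_const.div (hω.measurable.add_const x))).aestronglyMeasurable
  have hboundint : Integrable (fun _ : Torus d => C) := torus_integrable d _ continuous_const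
  -- limit of D
  have hD : Tendsto D l (𝓝 V) := by
    have h1 : Tendsto D l (𝓝 (∫ _ : Torus d, (1:ℝ))) := by
      apply tendsto_integral_filter_of_dominated_convergence (fun _ => C)
      · exact Eventually.of_forall hmeasD
      · filter_upwards [hev] with x hx
        exact Eventually.of_forall fun p => by
          rw [Real.norm_eq_abs]; exact (hx.2 p).2
      · exact hboundint
      · exact Eventually.of_forall fun p => by
          simpa using hlim (ω p) (hrange p)
    have : (∫ _ : Torus d, (1:ℝ)) = V := by
      simp [torus_volume d]
      exact torus_volume d
    rwa [this] at h1
  -- limit of N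
  have hN : Tendsto N l (𝓝 (∫ p, ω p)) := by
    apply tendsto_integral_filter_of_dominated_convergence (fun _ => C)
    · exact Eventually.of_forall hmeasN
    · filter_upwards [hev] with x hx
      refine Eventually.of_forall fun p => ?_
      have h1 : x * ω p / (ω p + x) = ω p * (x / (ω p + x)) := by ring
      have h2 := (hx.2 p).2
      have h3 := hrange p
      rw [Real.norm_eq_abs, h1, abs_mul, abs_of_nonneg h3.1]
      calc ω p * |x / (ω p + x)| ≤ 1 * C := by
            apply mul_le_mul h3.2 h2 (abs_nonneg _) zero_le_one
        _ = C := one_mul C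
    · exact hboundint
    · refine Eventually.of_forall fun p => ?_
      have h1 : Tendsto (fun x => ω p * (x / (ω p + x))) l (𝓝 (ω p * 1)) :=
        tendsto_const_nhds.mul (hlim (ω p) (hrange p))
      rw [mul_one] at h1
      exact h1.congr fun x => by ring
  -- eventually D x ≠ 0
  have hDne : ∀ᶠ x in l, D x ≠ 0 := by
    have := hD.eventually (eventually_ne_nhds hVpos.ne')
    exact this
  -- eventual identity
  have hid : ∀ᶠ x in l, (2 * π) ^ d * (∫ p, (ω p + x)⁻¹)⁻¹ - x = N x / D x := by
    filter_upwards [hev, hDne] with x hx hDx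
    obtain ⟨hx0, hxp⟩ := hx
    have hcont : Continuous fun p => (ω p + x)⁻¹ :=
      (hω.add continuous_const).inv₀ fun p => (hxp p).1
    have hint : Integrable fun p => (ω p + x)⁻¹ := torus_integrable d _ hcont
    set I : ℝ := ∫ p, (ω p + x)⁻¹ with hIdef
    have hDxI : D x = x * I := by
      rw [hDdef]
      simp only [div_eq_mul_inv]
      exact integral_const_mul x _
    have hIne : I ≠ 0 := by
      intro h
      rw [hDxI, h, mul_zero] at hDx
      exact hDx rfl
    have hNx : N x = x * V - x ^ 2 * I := by
      rw [hNdef]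
      have heq : ∀ p, x * ω p / (ω p + x) = x - x ^ 2 * (ω p + x)⁻¹ := by
        intro p
        have := (hxp p).1
        field_simp
        ring
      simp only [heq]
      rw [integral_sub (torus_integrable d _ continuous_const) ((hint.const_mul (x^2)))]
      rw [integral_const_mul, integral_const, smul_eq_mul, measureReal_def, torus_volume d, hVdef]
      ring
    rw [hNx, hDxI, ← hVdef]
    field_simp
  have hfinal : Tendsto (fun x => N x / D x) l (𝓝 ((∫ p, ω p) / V)) :=
    hN.div hD hVpos.ne'
  have : ((2 * π) ^ d)⁻¹ * ∫ p, ω p = (∫ p, ω p) / V := by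
    rw [div_eq_mul_inv, mul_comm, hVdef]
  rw [this]
  exact hfinal.congr' (by filter_upwards [hid] with x h using h.symm)

theorem F_limits_at_infinity (d : ℕ) (a : ℝ) (ha : 0 ≤ a) (ha1 : a < 1)
    (ω : Torus d → ℝ) (hω : Continuous ω) (hrange : ∀ p, ω p ∈ Icc a 1)
    (F : ℝ → ℝ)
    (hF : ∀ x, F x = (2 * π) ^ d * (∫ p, (ω p + x)⁻¹)⁻¹ - x) :
    Tendsto F atTop (𝓝 (((2 * π) ^ d)⁻¹ * ∫ p, ω p)) ∧
    Tendsto F atBot (𝓝 (((2 * π) ^ d)⁻¹ * ∫ p, ω p)) := by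
  have hrange' : ∀ p, ω p ∈ Icc (0:ℝ) 1 := fun p => ⟨ha.trans (hrange p).1, (hrange p).2⟩
  have hFeq : F = fun x => (2 * π) ^ d * (∫ p, (ω p + x)⁻¹)⁻¹ - x := funext hF
  constructor
  · rw [hFeq]
    apply aux_tendsto d ω hω hrange' atTop 1
    · filter_upwards [eventually_ge_atTop (1:ℝ)] with x hx
      refine ⟨by linarith, fun p => ?_⟩
      have h0 := (hrange' p).1
      have hpos : 0 < ω p + x := by linarith
      refine ⟨hpos.ne', ?_⟩
      rw [abs_of_nonneg (div_nonneg (by linarith) hpos.le)]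
      rw [div_le_one hpos]
      linarith
    · intro c hc
      have h1 : Tendsto (fun x : ℝ => c / x + 1) atTop (𝓝 1) := by
        have := (tendsto_const_nhds (x := c)).div_atTop (tendsto_id (α := ℝ))
        simpa using this.add (tendsto_const_nhds (x := (1:ℝ)))
      have h2 : Tendsto (fun x : ℝ => (c / x + 1)⁻¹) atTop (𝓝 1) := by
        simpa using h1.inv₀ one_ne_zero
      apply h2.congr'
      filter_upwards [eventually_gt_atTop (0:ℝ)] with x hx
      have : c + x ≠ 0 := by nlinarith [hc.1]
      field_simp
  · rw [hFeq]
    apply aux_tendsto d ω hω hrange' atBot 2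
    · filter_upwards [eventually_le_atBot (-2:ℝ)] with x hx
      refine ⟨by linarith, fun p => ?_⟩
      have h0 := (hrange' p).1
      have h1 := (hrange' p).2
      have hneg : ω p + x < 0 := by linarith
      refine ⟨hneg.ne, ?_⟩
      rw [abs_div, abs_of_nonpos (by linarith : x ≤ 0), abs_of_nonpos hneg.le]
      rw [div_le_iff₀ (by linarith : (0:ℝ) < -(ω p + x))]
      nlinarith
    · intro c hc
      have h1 : Tendsto (fun x : ℝ => c / x + 1) atBot (𝓝 1) := by
        have hbase : Tendsto (fun y : ℝ => c / y) atTop (𝓝 0) :=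
          tendsto_const_nhds.div_atTop tendsto_id
        have h2 : Tendsto (fun x : ℝ => c / (-x)) atBot (𝓝 0) :=
          hbase.comp tendsto_neg_atBot_atTop
        have h3 : Tendsto (fun x : ℝ => c / x) atBot (𝓝 0) := by
          simpa [div_neg] using h2.neg
        simpa using h3.add (tendsto_const_nhds (x := (1:ℝ)))
      have h2 : Tendsto (fun x : ℝ => (c / x + 1)⁻¹) atBot (𝓝 1) := by
        simpa using h1.inv₀ one_ne_zero
      apply h2.congr'
      filter_upwards [eventually_lt_atBot (-1:ℝ)] with x hx
      have hx0 : x ≠ 0 := by linarith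
      have : c + x ≠ 0 := by nlinarith [hc.1, hc.2]
      field_simp
end
end

section
/- If E₀/M₀ > β or E₀/M₀ < α (with M₀, E₀ > 0), then there is no admissible pair (μ,ν) for which the Rayleigh-Jeans equilibrium R_{μ,ν} = 1/(μω+ν) has mass M₀ and energy E₀. -/
open MeasureTheory Real Filter Topology Set

noncomputable section

/-- algebraic key inequality -/
lemma keyineq (c m s₁ s₂ : ℝ) (hc : 0 ≤ c) (hs₁ : 0 < s₁) (hs₂ : 0 < s₂)
    (hD₁ : 0 < c - m * s₁) (hD₂ : 0 < c - m * s₂) :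
    (s₁⁻¹ - s₂⁻¹) * (s₁ * (c - m * s₁)⁻¹ - s₂ * (c - m * s₂)⁻¹) ≤ 0 := by
  have h : (s₁⁻¹ - s₂⁻¹) * (s₁ * (c - m * s₁)⁻¹ - s₂ * (c - m * s₂)⁻¹)
      = -(c * (s₁ - s₂) ^ 2) / (s₁ * s₂ * (c - m * s₁) * (c - m * s₂)) := by
    have e1 : c - m * s₁ ≠ 0 := ne_of_gt hD₁
    have e2 : c - m * s₂ ≠ 0 := ne_of_gt hD₂
    rw [eq_div_iff (by positivity)]
    linear_combination
      (s₂ * ((s₁ * (c - m * s₁)⁻¹ - s₂ * (c - m * s₂)⁻¹) * (c - m * s₁) * (c - m * s₂)))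
          * inv_mul_cancel₀ hs₁.ne'
      - (s₁ * ((s₁ * (c - m * s₁)⁻¹ - s₂ * (c - m * s₂)⁻¹) * (c - m * s₁) * (c - m * s₂)))
          * inv_mul_cancel₀ hs₂.ne'
      + ((s₂ - s₁) * s₁ * (c - m * s₂)) * inv_mul_cancel₀ e1
      - ((s₂ - s₁) * s₂ * (c - m * s₁)) * inv_mul_cancel₀ e2
  rw [h]
  apply div_nonpos_of_nonpos_of_nonneg
  · nlinarith [sq_nonneg (s₁ - s₂)]
  · positivity

/-- Chebyshev integral inequality for anti-monotone pairs. -/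
lemma cheb {X : Type*} [MeasurableSpace X] (μ : Measure X) [IsFiniteMeasure μ]
    (f g : X → ℝ) (hf : Integrable f μ) (hg : Integrable g μ)
    (hfg : Integrable (fun x => f x * g x) μ)
    (N : Set X) (hN : μ N = 0)
    (hanti : ∀ x ∉ N, ∀ y ∉ N, (f x - f y) * (g x - g y) ≤ 0) :
    (μ Set.univ).toReal * ∫ x, f x * g x ∂μ ≤ (∫ x, f x ∂μ) * ∫ x, g x ∂μ := by
  have h1 : Integrable (fun z : X × X => f z.1 * g z.2) (μ.prod μ) := hf.mul_prod hg
  have h2 : Integrable (fun z : X × X => g z.1 * f z.2) (μ.prod μ) := hg.mul_prod hf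
  have h3 : Integrable (fun z : X × X => (f z.1 * g z.1) * (1 : ℝ)) (μ.prod μ) :=
    hfg.mul_prod (integrable_const (1 : ℝ))
  have h4 : Integrable (fun z : X × X => (1 : ℝ) * (f z.2 * g z.2)) (μ.prod μ) :=
    (integrable_const (1 : ℝ)).mul_prod hfg
  have key : ∫ z : X × X, (f z.1 - f z.2) * (g z.1 - g z.2) ∂(μ.prod μ) ≤ 0 := by
    apply integral_nonpos_of_ae
    have hbad : (μ.prod μ) (N ×ˢ Set.univ ∪ Set.univ ×ˢ N) = 0 := by
      apply measure_union_null <;> simp [Measure.prod_prod, hN]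
    have hmem : (N ×ˢ Set.univ ∪ Set.univ ×ˢ N)ᶜ ∈ ae (μ.prod μ) := by
      rw [mem_ae_iff, compl_compl]; exact hbad
    filter_upwards [hmem] with z hz
    simp only [Set.mem_union, Set.mem_prod, Set.mem_univ, and_true, true_and,
      Set.mem_compl_iff, not_or] at hz
    exact hanti _ hz.1 _ hz.2
  have expand : ∀ z : X × X, (f z.1 - f z.2) * (g z.1 - g z.2)
      = (f z.1 * g z.1) * (1 : ℝ) - f z.1 * g z.2 - g z.1 * f z.2 + (1 : ℝ) * (f z.2 * g z.2) := by
    intro z; ring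
  have step : ∫ z : X × X, (f z.1 - f z.2) * (g z.1 - g z.2) ∂(μ.prod μ)
      = ((∫ z : X × X, (f z.1 * g z.1) * (1 : ℝ) ∂(μ.prod μ))
          - ∫ z : X × X, f z.1 * g z.2 ∂(μ.prod μ))
        - (∫ z : X × X, g z.1 * f z.2 ∂(μ.prod μ))
        + ∫ z : X × X, (1 : ℝ) * (f z.2 * g z.2) ∂(μ.prod μ) := by
    have i1 : Integrable (fun z : X × X => (f z.1 * g z.1) * (1 : ℝ) - f z.1 * g z.2)
        (μ.prod μ) := h3.sub h1
    have i2 : Integrable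
        (fun z : X × X => ((f z.1 * g z.1) * (1 : ℝ) - f z.1 * g z.2) - g z.1 * f z.2)
        (μ.prod μ) := i1.sub h2
    calc ∫ z : X × X, (f z.1 - f z.2) * (g z.1 - g z.2) ∂(μ.prod μ)
        = ∫ z : X × X, (((f z.1 * g z.1) * (1 : ℝ) - f z.1 * g z.2) - g z.1 * f z.2)
            + (1 : ℝ) * (f z.2 * g z.2) ∂(μ.prod μ) :=
          integral_congr_ae (Eventually.of_forall expand)
      _ = (∫ z : X × X, (((f z.1 * g z.1) * (1 : ℝ) - f z.1 * g z.2) - g z.1 * f z.2)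
            ∂(μ.prod μ)) + ∫ z : X × X, (1 : ℝ) * (f z.2 * g z.2) ∂(μ.prod μ) :=
          integral_add i2 h4
      _ = ((∫ z : X × X, ((f z.1 * g z.1) * (1 : ℝ) - f z.1 * g z.2) ∂(μ.prod μ))
            - ∫ z : X × X, g z.1 * f z.2 ∂(μ.prod μ))
            + ∫ z : X × X, (1 : ℝ) * (f z.2 * g z.2) ∂(μ.prod μ) := by
          rw [integral_sub i1 h2]
      _ = (((∫ z : X × X, (f z.1 * g z.1) * (1 : ℝ) ∂(μ.prod μ))
            - ∫ z : X × X, f z.1 * g z.2 ∂(μ.prod μ))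
            - ∫ z : X × X, g z.1 * f z.2 ∂(μ.prod μ))
            + ∫ z : X × X, (1 : ℝ) * (f z.2 * g z.2) ∂(μ.prod μ) := by
          rw [integral_sub h3 h1]
  rw [step, integral_prod_mul (fun x => f x * g x) (fun _ => (1 : ℝ)),
    integral_prod_mul f g, integral_prod_mul g f,
    integral_prod_mul (fun _ => (1 : ℝ)) (fun x => f x * g x), integral_const] at key
  simp only [smul_eq_mul, mul_one, measureReal_def] at key
  nlinarith [key]

/-- The main Chebyshev-based estimate. -/
lemma aux {X : Type*} [MeasurableSpace X] (vol : Measure X) [IsFiniteMeasure vol]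
    (φ D : X → ℝ) (hφm : Measurable φ) (hφ0 : ∀ x, 0 ≤ φ x)
    (c m : ℝ) (hc : 0 ≤ c) (hrel : ∀ x, D x = c - m * φ x) (hD0 : ∀ x, 0 ≤ D x)
    (hφnull : vol {x | φ x = 0} = 0) (hDnull : vol {x | D x = 0} = 0)
    (hR : Integrable (fun x => (D x)⁻¹) vol)
    (hφinv : Integrable (fun x => (φ x)⁻¹) vol)
    (C : ℝ) (hφb : ∀ x, |φ x| ≤ C) :
    (vol Set.univ).toReal * ∫ x, (D x)⁻¹ ∂vol
      ≤ (∫ x, (φ x)⁻¹ ∂vol) * ∫ x, φ x * (D x)⁻¹ ∂vol := by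
  set N : Set X := {x | φ x = 0} ∪ {x | D x = 0} with hNdef
  have hN : vol N = 0 := measure_union_null hφnull hDnull
  have hg : Integrable (fun x => φ x * (D x)⁻¹) vol :=
    hR.bdd_mul (c := C) hφm.aestronglyMeasurable (Eventually.of_forall fun x => by simpa [Real.norm_eq_abs] using hφb x)
  have hae : ∀ᵐ x ∂vol, φ x ≠ 0 := by
    rw [ae_iff]; simpa using hφnull
  have hfg : (fun x => (φ x)⁻¹ * (φ x * (D x)⁻¹)) =ᵐ[vol] fun x => (D x)⁻¹ := by
    filter_upwards [hae] with x hx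
    field_simp
  have hfgInt : Integrable (fun x => (φ x)⁻¹ * (φ x * (D x)⁻¹)) vol := hR.congr hfg.symm
  have hanti : ∀ x ∉ N, ∀ y ∉ N,
      ((φ x)⁻¹ - (φ y)⁻¹) * (φ x * (D x)⁻¹ - φ y * (D y)⁻¹) ≤ 0 := by
    intro x hx y hy
    simp only [hNdef, Set.mem_union, Set.mem_setOf_eq, not_or] at hx hy
    have hφx : 0 < φ x := lt_of_le_of_ne (hφ0 x) (Ne.symm hx.1)
    have hφy : 0 < φ y := lt_of_le_of_ne (hφ0 y) (Ne.symm hy.1)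
    have hDx : 0 < c - m * φ x := by
      rw [← hrel x]; exact lt_of_le_of_ne (hD0 x) (Ne.symm hx.2)
    have hDy : 0 < c - m * φ y := by
      rw [← hrel y]; exact lt_of_le_of_ne (hD0 y) (Ne.symm hy.2)
    have := keyineq c m (φ x) (φ y) hc hφx hφy hDx hDy
    rw [hrel x, hrel y]
    exact this
  have hmain := cheb vol (fun x => (φ x)⁻¹) (fun x => φ x * (D x)⁻¹)
    hφinv hg hfgInt N hN hanti
  rwa [integral_congr_ae hfg] at hmain

set_option maxHeartbeats 1000000 in
open Classical in
theorem rayleigh_jeans_nonexistence (d : ℕ) (a : ℝ) (ha : 0 ≤ a) (ha1 : a < 1)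
    (ω : Torus d → ℝ) (hω : Continuous ω) (hrange : ∀ p, ω p ∈ Icc a 1)
    (hmin : ∃ p, ω p = a) (hmax : ∃ p, ω p = 1)
    (hminnull : volume {p | ω p = a} = 0) (hmaxnull : volume {p | ω p = 1} = 0)
    (α β : ℝ)
    (hα : α = if Integrable (fun p => (ω p - a)⁻¹) then
        a + (2 * π) ^ d * (∫ p, (ω p - a)⁻¹)⁻¹ else a)
    (hβ : β = if Integrable (fun p => (1 - ω p)⁻¹) then
        1 - (2 * π) ^ d * (∫ p, (1 - ω p)⁻¹)⁻¹ else 1)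
    (M₀ E₀ : ℝ) (hM₀ : 0 < M₀) (hE₀ : 0 < E₀)
    (h : β < E₀ / M₀ ∨ E₀ / M₀ < α) :
    ¬ ∃ μ ν : ℝ,
      (∀ p, 0 ≤ μ * ω p + ν) ∧
      Integrable (fun p => (μ * ω p + ν)⁻¹) ∧
      (∫ p, (μ * ω p + ν)⁻¹) = M₀ ∧
      (∫ p, ω p * (μ * ω p + ν)⁻¹) = E₀ := by
  rintro ⟨m, n, hpos, hint, hM, hE⟩
  have hωm : Measurable ω := hω.measurable
  have hTvol : (volume (Set.univ : Set (Torus d))).toReal = (2 * π) ^ d := by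
    rw [volume_pi, Measure.pi_univ]
    simp [AddCircle.measure_univ, ← ENNReal.ofReal_pow (by positivity : (0:ℝ) ≤ 2*π),
      ENNReal.toReal_ofReal (by positivity : (0:ℝ) ≤ (2*π)^d), ENNReal.toReal_ofReal pi_pos.le]
  have hTpos : 0 < (2 * π) ^ d := by positivity
  have hc_min : 0 ≤ m * a + n := by
    obtain ⟨p, hp⟩ := hmin; have := hpos p; rwa [hp] at this
  have hc_max : 0 ≤ m * 1 + n := by
    obtain ⟨p, hp⟩ := hmax; have := hpos p; rwa [hp] at this
  have hR0 : ∀ p, 0 ≤ (m * ω p + n)⁻¹ := fun p => inv_nonneg.2 (hpos p)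
  have hDnull : volume {p | m * ω p + n = 0} = 0 := by
    rcases lt_trichotomy m 0 with hm | hm | hm
    · refine measure_mono_null ?_ hmaxnull
      intro p hp
      simp only [Set.mem_setOf_eq] at hp ⊢
      have h1 : ω p ≤ 1 := (hrange p).2
      have h2 : 1 ≤ ω p := by nlinarith
      linarith
    · by_cases hn : n = 0
      · exfalso
        rw [hm, hn] at hM
        simp at hM
        linarith
      · have : {p : Torus d | m * ω p + n = 0} = ∅ := by
          ext p; simp [hm, hn]
        rw [this]; exact measure_empty
    · refine measure_mono_null ?_ hminnull
      intro p hp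
      simp only [Set.mem_setOf_eq] at hp ⊢
      have h1 : a ≤ ω p := (hrange p).1
      have h2 : ω p ≤ a := by nlinarith
      linarith
  have hωb : ∀ p, |ω p| ≤ 1 := by
    intro p
    rw [abs_le]
    constructor <;> nlinarith [(hrange p).1, (hrange p).2]
  have hωR : Integrable (fun p => ω p * (m * ω p + n)⁻¹) :=
    hint.bdd_mul (c := 1) hωm.aestronglyMeasurable (Eventually.of_forall fun p => by
      simpa [Real.norm_eq_abs] using hωb p)
  -- energy shifted integrals
  have heqa : ∫ p, (ω p - a) * (m * ω p + n)⁻¹ = E₀ - a * M₀ := by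
    have hfun : (fun p : Torus d => (ω p - a) * (m * ω p + n)⁻¹)
        = fun p => ω p * (m * ω p + n)⁻¹ - a * (m * ω p + n)⁻¹ := by
      funext p; ring
    rw [hfun, integral_sub hωR (hint.const_mul a), integral_const_mul, hM, hE]
  have heqb : ∫ p, (1 - ω p) * (m * ω p + n)⁻¹ = M₀ - E₀ := by
    have hfun : (fun p : Torus d => (1 - ω p) * (m * ω p + n)⁻¹)
        = fun p => (m * ω p + n)⁻¹ - ω p * (m * ω p + n)⁻¹ := by
      funext p; ring
    rw [hfun, integral_sub hint hωR, hM, hE]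
  have hEa : 0 ≤ E₀ - a * M₀ := by
    rw [← heqa]
    exact integral_nonneg fun p => mul_nonneg (by linarith [(hrange p).1]) (hR0 p)
  have hEb : 0 ≤ M₀ - E₀ := by
    rw [← heqb]
    exact integral_nonneg fun p => mul_nonneg (by linarith [(hrange p).2]) (hR0 p)
  rcases h with h | h
  · -- β < E₀/M₀
    by_cases hJ : Integrable (fun p => (1 - ω p)⁻¹)
    · rw [if_pos hJ] at hβ
      set J := ∫ p, (1 - ω p)⁻¹ with hJdef
      have hφnull : volume {p : Torus d | 1 - ω p = 0} = 0 := by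
        refine measure_mono_null ?_ hmaxnull
        intro p hp; simp only [Set.mem_setOf_eq] at hp ⊢; linarith
      have hb : ∀ p, |1 - ω p| ≤ 1 := fun p => by
        rw [abs_le]; constructor <;> nlinarith [(hrange p).1, (hrange p).2]
      have hφ0 : ∀ p, 0 ≤ 1 - ω p := fun p => by linarith [(hrange p).2]
      have hkey := aux volume (fun p => 1 - ω p) (fun p => m * ω p + n)
        (measurable_const.sub hωm) hφ0
        (m * 1 + n) m hc_max (fun p => by ring) hpos hφnull hDnull hint hJ 1 hb
      rw [hTvol, hM, heqb, ← hJdef] at hkey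
      have hJnn : 0 ≤ J := integral_nonneg fun p =>
        inv_nonneg.2 (by linarith [(hrange p).2])
      have hJ0 : 0 < J := by
        rcases hJnn.lt_or_eq with h' | h'
        · exact h'
        · exfalso; rw [← h'] at hkey; nlinarith
      rw [hβ, lt_div_iff₀ hM₀] at h
      have hexp : J * ((1 - (2 * π) ^ d * J⁻¹) * M₀) = J * M₀ - (2 * π) ^ d * M₀ := by
        field_simp
      nlinarith [mul_lt_mul_of_pos_left h hJ0, hkey, hexp]
    · rw [if_neg hJ] at hβ
      rw [hβ, lt_div_iff₀ hM₀] at h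
      linarith
  · -- E₀/M₀ < α
    by_cases hI : Integrable (fun p => (ω p - a)⁻¹)
    · rw [if_pos hI] at hα
      set I := ∫ p, (ω p - a)⁻¹ with hIdef
      have hφnull : volume {p : Torus d | ω p - a = 0} = 0 := by
        refine measure_mono_null ?_ hminnull
        intro p hp; simp only [Set.mem_setOf_eq] at hp ⊢; linarith
      have hb : ∀ p, |ω p - a| ≤ 1 := fun p => by
        rw [abs_le]; constructor <;> nlinarith [(hrange p).1, (hrange p).2]
      have hφ0 : ∀ p, 0 ≤ ω p - a := fun p => by linarith [(hrange p).1]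
      have hkey := aux volume (fun p => ω p - a) (fun p => m * ω p + n)
        (hωm.sub measurable_const) hφ0
        (m * a + n) (-m) hc_min (fun p => by ring) hpos hφnull hDnull hint hI 1 hb
      rw [hTvol, hM, heqa, ← hIdef] at hkey
      have hInn : 0 ≤ I := integral_nonneg fun p =>
        inv_nonneg.2 (by linarith [(hrange p).1])
      have hI0 : 0 < I := by
        rcases hInn.lt_or_eq with h' | h'
        · exact h'
        · exfalso; rw [← h'] at hkey; nlinarith
      rw [hα, div_lt_iff₀ hM₀] at h
      have hexp : I * ((a + (2 * π) ^ d * I⁻¹) * M₀) = I * a * M₀ + (2 * π) ^ d * M₀ := by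
        field_simp
      nlinarith [mul_lt_mul_of_pos_left h hI0, hkey, hexp]
    · rw [if_neg hI] at hα
      rw [hα, div_lt_iff₀ hM₀] at h
      linarith
end
end

section
/- Suppose α < E₀/M₀ < β and let R_{μ,ν} be the unique Rayleigh–Jeans equilibrium with mass M₀ and energy E₀. Then for every nonnegative finite measure λ on T^d with M(λ) = M₀ and E(λ) = E₀, one has H_cl(λ) ≤ H_cl(R_{μ,ν}), with equality if and only if λ = R_{μ,ν} dp. -/
open MeasureTheory Real Filter Topology Set

noncomputable section

open Classical in
theorem classical_entropy_maximizer_no_condensation (d : ℕ) (a : ℝ) (ha : 0 ≤ a) (ha1 : a < 1)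
    (ω : Torus d → ℝ) (hω : Continuous ω) (hrange : ∀ p, ω p ∈ Icc a 1)
    (hmin : ∃ p, ω p = a) (hmax : ∃ p, ω p = 1)
    (hminnull : volume {p | ω p = a} = 0) (hmaxnull : volume {p | ω p = 1} = 0)
    (α β : ℝ)
    (hα : α = if Integrable (fun p => (ω p - a)⁻¹) then
        a + (2 * π) ^ d * (∫ p, (ω p - a)⁻¹)⁻¹ else a)
    (hβ : β = if Integrable (fun p => (1 - ω p)⁻¹) then
        1 - (2 * π) ^ d * (∫ p, (1 - ω p)⁻¹)⁻¹ else 1)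
    (M₀ E₀ : ℝ) (hM₀ : 0 < M₀) (hE₀ : 0 < E₀)
    (hlow : α < E₀ / M₀) (hhigh : E₀ / M₀ < β)
    -- R_{μ,ν} is the Rayleigh-Jeans equilibrium with mass M₀ and energy E₀:
    (μ ν : ℝ) (hposR : ∀ᵐ p, 0 < μ * ω p + ν)
    (hR : Integrable (fun p => (μ * ω p + ν)⁻¹))
    (hlR : Integrable (fun p => Real.log ((μ * ω p + ν)⁻¹)))
    (hMR : (∫ p, (μ * ω p + ν)⁻¹) = M₀)
    (hER : (∫ p, ω p * (μ * ω p + ν)⁻¹) = E₀) :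
    ∀ (lam : Measure (Torus d)), IsFiniteMeasure lam →
    ∀ (f : Torus d → ℝ), Measurable f → (∀ᵐ p, 0 < f p) → Integrable f →
      Integrable (fun p => Real.log (f p)) →
    ∀ (lams : Measure (Torus d)), Measure.MutuallySingular lams volume →
      lam = volume.withDensity (fun p => ENNReal.ofReal (f p)) + lams →
      (lam univ).toReal = M₀ → (∫ p, ω p ∂lam) = E₀ →
      (∫ p, Real.log (f p)) ≤ (∫ p, Real.log ((μ * ω p + ν)⁻¹)) ∧
      ((∫ p, Real.log (f p)) = (∫ p, Real.log ((μ * ω p + ν)⁻¹)) ↔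
        lam = volume.withDensity (fun p => ENNReal.ofReal ((μ * ω p + ν)⁻¹))) := by
  intro lam hlamfin f hfm hfpos hfint hlogfint lams hsing hdecomp hmass henergy
  -- basic facts about ω and g p := μ * ω p + ν
  have hω01 : ∀ p, 0 ≤ ω p ∧ ω p ≤ 1 := fun p => ⟨ha.trans (hrange p).1, (hrange p).2⟩
  have hgcont : Continuous fun p : Torus d => μ * ω p + ν :=
    (continuous_const.mul hω).add continuous_const
  have hgm : Measurable fun p : Torus d => μ * ω p + ν := hgcont.measurable
  have hgbd : ∀ p, ‖μ * ω p + ν‖ ≤ |μ| + |ν| := by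
    intro p
    have h1 := (hω01 p).1; have h2 := (hω01 p).2
    have hμ : |μ * ω p| ≤ |μ| := by
      rw [abs_mul]
      nlinarith [abs_nonneg μ, abs_le.mpr (⟨by linarith, h2⟩ : -1 ≤ ω p ∧ ω p ≤ 1)]
    calc ‖μ * ω p + ν‖ = |μ * ω p + ν| := rfl
      _ ≤ |μ * ω p| + |ν| := abs_add_le _ _
      _ ≤ |μ| + |ν| := by linarith
  have hωbd : ∀ p, ‖ω p‖ ≤ 1 := fun p => by
    rw [Real.norm_eq_abs, abs_le]; exact ⟨by linarith [(hω01 p).1], (hω01 p).2⟩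
  -- nonnegativity of μ ω + ν everywhere
  have hgnn : ∀ p, 0 ≤ μ * ω p + ν := by
    intro p
    by_contra hneg
    push_neg at hneg
    have hU : IsOpen {q : Torus d | μ * ω q + ν < 0} := isOpen_lt hgcont continuous_const
    have hpos := hU.measure_pos (volume : Measure (Torus d)) ⟨p, hneg⟩
    have h0 : volume {q : Torus d | ¬ (0:ℝ) < μ * ω q + ν} = 0 := ae_iff.mp hposR
    have hsub : {q : Torus d | μ * ω q + ν < 0} ⊆ {q | ¬ (0:ℝ) < μ * ω q + ν} :=
      fun q hq => not_lt.mpr (le_of_lt hq)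
    exact absurd (measure_mono_null hsub h0) (ne_of_gt hpos)
  -- integrabilities
  have hfg_int : Integrable (fun p => f p * (μ * ω p + ν)) := by
    simpa [mul_comm] using hfint.bdd_mul hgcont.aestronglyMeasurable (Filter.Eventually.of_forall hgbd)
  have hωf_int : Integrable (fun p => ω p * f p) :=
    hfint.bdd_mul hω.aestronglyMeasurable (Filter.Eventually.of_forall hωbd)
  have hωR_int : Integrable (fun p => ω p * (μ * ω p + ν)⁻¹) :=
    hR.bdd_mul hω.aestronglyMeasurable (Filter.Eventually.of_forall hωbd)
  -- a.e. positivity of f * g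
  have hfgpos : ∀ᵐ p, 0 < f p * (μ * ω p + ν) :=
    (hfpos.and hposR).mono fun p hp => mul_pos hp.1 hp.2
  -- log identity
  have hlogfg : (fun p => Real.log (f p * (μ * ω p + ν)))
      =ᵐ[volume] fun p => Real.log (f p) - Real.log ((μ * ω p + ν)⁻¹) :=
    by filter_upwards [hfpos, hposR] with p h1 h2
       rw [Real.log_mul h1.ne' h2.ne', Real.log_inv]; ring
  have hlogfg_int : Integrable (fun p => Real.log (f p * (μ * ω p + ν))) :=
    (hlogfint.sub hlR).congr hlogfg.symm
  have hlogfg_eq : (∫ p, Real.log (f p * (μ * ω p + ν)))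
      = (∫ p, Real.log (f p)) - ∫ p, Real.log ((μ * ω p + ν)⁻¹) := by
    rw [integral_congr_ae hlogfg, integral_sub hlogfint hlR]
  -- total volume
  have hV : ((volume : Measure (Torus d)) univ).toReal = μ * E₀ + ν * M₀ := by
    have hgR : (fun p => (μ * ω p + ν) * (μ * ω p + ν)⁻¹) =ᵐ[volume] fun _ => (1:ℝ) :=
      hposR.mono fun p hp => mul_inv_cancel₀ hp.ne'
    have h1 : (∫ p, (μ * ω p + ν) * (μ * ω p + ν)⁻¹) = ∫ _p : Torus d, (1:ℝ) :=
      integral_congr_ae hgR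
    have h2 : (∫ p, (μ * ω p + ν) * (μ * ω p + ν)⁻¹) = μ * E₀ + ν * M₀ := by
      have hsplit : (fun p : Torus d => (μ * ω p + ν) * (μ * ω p + ν)⁻¹)
          = fun p => μ * (ω p * (μ * ω p + ν)⁻¹) + ν * (μ * ω p + ν)⁻¹ :=
        funext fun p => by ring
      rw [hsplit, integral_add (hωR_int.const_mul μ) (hR.const_mul ν),
        integral_const_mul, integral_const_mul, hER, hMR]
    rw [h1, integral_const, smul_eq_mul, mul_one] at h2
    exact h2
  -- finiteness of the pieces
  haveI hlamsfin : IsFiniteMeasure lams :=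
    isFiniteMeasure_of_le lam (by rw [hdecomp]; exact Measure.le_add_left le_rfl)
  haveI hwdfin : IsFiniteMeasure (volume.withDensity fun p => ENNReal.ofReal (f p)) :=
    isFiniteMeasure_of_le lam (by rw [hdecomp]; exact Measure.le_add_right le_rfl)
  have hωint : ∀ (m : Measure (Torus d)), IsFiniteMeasure m → Integrable ω m := by
    intro m hm
    exact Integrable.mono' (integrable_const 1) hω.aestronglyMeasurable
      (Filter.Eventually.of_forall fun p => (hωbd p).trans (by norm_num))
  -- mass identity
  have hfnn : 0 ≤ᵐ[volume] f := hfpos.mono fun p hp => hp.le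
  have hwduniv : (volume.withDensity fun p => ENNReal.ofReal (f p)) univ
      = ENNReal.ofReal (∫ p, f p) := by
    rw [withDensity_apply _ MeasurableSet.univ, setLIntegral_univ,
      ← ofReal_integral_eq_lintegral_ofReal hfint hfnn]
  have hS : (∫ p, f p) + (lams univ).toReal = M₀ := by
    have h := hmass
    rw [hdecomp, Measure.add_apply, ENNReal.toReal_add (measure_ne_top _ _) (measure_ne_top _ _),
      hwduniv, ENNReal.toReal_ofReal (integral_nonneg_of_ae hfnn)] at h
    exact h
  -- energy identity
  have hωwd : (∫ p, ω p ∂(volume.withDensity fun p => ENNReal.ofReal (f p)))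
      = ∫ p, ω p * f p := by
    have hd : (fun p => ENNReal.ofReal (f p)) = fun p => ((f p).toNNReal : ENNReal) := rfl
    rw [hd, integral_withDensity_eq_integral_smul hfm.real_toNNReal ω]
    refine integral_congr_ae (hfpos.mono fun p hp => ?_)
    simp [NNReal.smul_def, Real.coe_toNNReal _ hp.le, mul_comm]
  have hT : (∫ p, ω p * f p) + (∫ p, ω p ∂lams) = E₀ := by
    rw [← henergy, hdecomp, integral_add_measure (hωint _ hwdfin) (hωint _ hlamsfin), hωwd]
  -- the defect term is nonnegative
  have hCeq : μ * (∫ p, ω p ∂lams) + ν * (lams univ).toReal = ∫ p, (μ * ω p + ν) ∂lams := by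
    rw [integral_add ((hωint _ hlamsfin).const_mul μ) (integrable_const ν),
      integral_const_mul, integral_const, smul_eq_mul, measureReal_def]
    ring
  have hC : 0 ≤ μ * (∫ p, ω p ∂lams) + ν * (lams univ).toReal := by
    rw [hCeq]; exact integral_nonneg fun p => hgnn p
  -- main inequality
  have hle : (fun p => Real.log (f p * (μ * ω p + ν)))
      ≤ᵐ[volume] fun p => f p * (μ * ω p + ν) - 1 :=
    hfgpos.mono fun p hp => Real.log_le_sub_one_of_pos hp
  have hfg1_int : Integrable (fun p => f p * (μ * ω p + ν) - 1) :=
    hfg_int.sub (integrable_const 1)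
  have hmono : (∫ p, Real.log (f p * (μ * ω p + ν)))
      ≤ ∫ p, (f p * (μ * ω p + ν) - 1) :=
    integral_mono_ae hlogfg_int hfg1_int hle
  have hBeq : (∫ p, (f p * (μ * ω p + ν) - 1))
      = -(μ * (∫ p, ω p ∂lams) + ν * (lams univ).toReal) := by
    have hsplit : (fun p : Torus d => f p * (μ * ω p + ν))
        = fun p => μ * (ω p * f p) + ν * f p := funext fun p => by ring
    rw [integral_sub hfg_int (integrable_const 1), integral_const, smul_eq_mul, mul_one, hsplit,
      integral_add ((hωf_int).const_mul μ) (hfint.const_mul ν),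
      integral_const_mul, integral_const_mul, measureReal_def, hV]
    have h1 : (∫ p, ω p * f p) = E₀ - ∫ p, ω p ∂lams := by linarith
    have h2 : (∫ p, f p) = M₀ - (lams univ).toReal := by linarith
    rw [h1, h2]; ring
  have hmain : (∫ p, Real.log (f p)) ≤ ∫ p, Real.log ((μ * ω p + ν)⁻¹) := by
    have := hmono
    rw [hlogfg_eq, hBeq] at this
    linarith
  refine ⟨hmain, ?_, ?_⟩
  · -- equality implies lam = R dp
    intro heq
    have hA0 : (∫ p, Real.log (f p * (μ * ω p + ν))) = 0 := by rw [hlogfg_eq, heq]; ring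
    have hB0 : (∫ p, (f p * (μ * ω p + ν) - 1)) = 0 := by
      refine le_antisymm ?_ ?_
      · rw [hBeq]; linarith
      · rw [← hA0]; exact hmono
    have hzero : (∫ p, ((f p * (μ * ω p + ν) - 1) - Real.log (f p * (μ * ω p + ν)))) = 0 := by
      rw [integral_sub hfg1_int hlogfg_int, hB0, hA0]; ring
    have hnn : 0 ≤ᵐ[volume]
        fun p => (f p * (μ * ω p + ν) - 1) - Real.log (f p * (μ * ω p + ν)) :=
      hfgpos.mono fun p hp => sub_nonneg.mpr (Real.log_le_sub_one_of_pos hp)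
    have haeeq := (integral_eq_zero_iff_of_nonneg_ae hnn (hfg1_int.sub hlogfg_int)).mp hzero
    have hfg1 : ∀ᵐ p, f p * (μ * ω p + ν) = 1 := by
      filter_upwards [haeeq, hfgpos] with p h1 h2
      by_contra hne
      have hlt := Real.log_lt_sub_one_of_pos h2 hne
      simp only [Pi.zero_apply] at h1
      linarith
    have hfR : f =ᵐ[volume] fun p => (μ * ω p + ν)⁻¹ := by
      filter_upwards [hfg1, hposR] with p h1 h2
      field_simp
      linarith [mul_comm (f p) (μ * ω p + ν)]
    have hintf : (∫ p, f p) = M₀ := (integral_congr_ae hfR).trans hMR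
    have hlams0 : lams = 0 := by
      have hSr : (lams univ).toReal = 0 := by linarith
      have := (ENNReal.toReal_eq_zero_iff _).mp hSr
      rcases this with h | h
      · exact Measure.measure_univ_eq_zero.mp h
      · exact absurd h (measure_ne_top _ _)
    rw [hdecomp, hlams0, add_zero]
    refine withDensity_congr_ae ?_
    filter_upwards [hfR] with p hp
    rw [hp]
  · -- lam = R dp implies equality
    intro hlamR
    have hlamsac : lams ≪ (volume : Measure (Torus d)) := by
      have hle' : lams ≤ lam := by rw [hdecomp]; exact Measure.le_add_left le_rfl
      have := Measure.absolutelyContinuous_of_le hle'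
      rw [hlamR] at this
      exact this.trans (withDensity_absolutelyContinuous _ _)
    have hlams0 : lams = 0 := by
      obtain ⟨s, hsm, hs1, hs2⟩ := hsing
      have h3 : lams sᶜ = 0 := hlamsac hs2
      have h4 : lams univ = 0 := by
        have h5 : lams univ ≤ lams s + lams sᶜ := by
          rw [← union_compl_self s]; exact measure_union_le _ _
        rw [hs1, h3] at h5
        simpa using h5
      exact Measure.measure_univ_eq_zero.mp h4
    have hwdeq : volume.withDensity (fun p => ENNReal.ofReal (f p))
        = volume.withDensity (fun p => ENNReal.ofReal ((μ * ω p + ν)⁻¹)) := by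
      rw [hdecomp, hlams0, add_zero] at hlamR
      exact hlamR
    have hofeq : (fun p => ENNReal.ofReal (f p))
        =ᵐ[volume] fun p => ENNReal.ofReal ((μ * ω p + ν)⁻¹) :=
      (withDensity_eq_iff_of_sigmaFinite hfm.ennreal_ofReal.aemeasurable
        (hgm.inv.ennreal_ofReal.aemeasurable)).mp hwdeq
    have hfR : f =ᵐ[volume] fun p => (μ * ω p + ν)⁻¹ := by
      filter_upwards [hofeq, hfpos, hposR] with p h1 h2 h3
      exact (ENNReal.ofReal_eq_ofReal_iff h2.le (inv_pos.mpr h3).le).mp h1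
    refine integral_congr_ae ?_
    filter_upwards [hfR] with p hp
    rw [hp]
end
end

section
/- Let λ be a nonnegative finite measure on T^d with dλ = f dp + dλ_sing, M(λ) = M₀, E(λ) = E₀, and let B_{μ,ν} = 1/(e^{μω+ν}-1) be integrable with μω+ν > 0 a.e. and μω+ν ≥ 0 everywhere. Then the quantum entropy H_qu(λ) = ∫[(1+f)ln(1+f) - f ln f] dp satisfies H_qu(λ) ≤ H_qu(B_{μ,ν}) + μ(E₀ - E(B_{μ,ν})) + ν(M₀ - M(B_{μ,ν})), with equality only if f = B_{μ,ν} a.e. -/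
open MeasureTheory Real Filter Topology Set
open scoped ENNReal NNReal

noncomputable section

lemma core_le (x b : ℝ) (hx : 0 ≤ x) (hb : 0 < b) :
    (1+x) * Real.log ((1+x)/(1+b)) ≤ x * Real.log (x/b) := by
  have h1b : (0:ℝ) < 1 + b := by linarith
  have hconv := Real.convexOn_mul_log.2 (mem_Ici.2 (by norm_num : (0:ℝ) ≤ 1))
    (mem_Ici.2 (div_nonneg hx hb.le)) (by positivity : (0:ℝ) ≤ 1/(1+b))
    (by positivity : (0:ℝ) ≤ b/(1+b)) (by field_simp)
  simp only [smul_eq_mul, Real.log_one, mul_one, mul_zero, zero_add] at hconv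
  have e1 : 1/(1+b) + b/(1+b) * (x/b) = (1+x)/(1+b) := by field_simp
  rw [e1] at hconv
  have := mul_le_mul_of_nonneg_left hconv h1b.le
  calc (1+x) * Real.log ((1+x)/(1+b))
      = (1+b) * ((1+x)/(1+b) * Real.log ((1+x)/(1+b))) := by field_simp
    _ ≤ (1+b) * (b/(1+b) * (x/b * Real.log (x/b))) := this
    _ = x * Real.log (x/b) := by field_simp

lemma core_lt (x b : ℝ) (hx : 0 ≤ x) (hb : 0 < b) (hne : x ≠ b) :
    (1+x) * Real.log ((1+x)/(1+b)) < x * Real.log (x/b) := by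
  have h1b : (0:ℝ) < 1 + b := by linarith
  have hsne : (1:ℝ) ≠ x/b := by
    intro h; apply hne; field_simp at h; linarith
  have hconv := Real.strictConvexOn_mul_log.2 (mem_Ici.2 (by norm_num : (0:ℝ) ≤ 1))
    (mem_Ici.2 (div_nonneg hx hb.le)) hsne (by positivity : (0:ℝ) < 1/(1+b))
    (by positivity : (0:ℝ) < b/(1+b)) (by field_simp)
  simp only [smul_eq_mul, Real.log_one, mul_one, mul_zero, zero_add] at hconv
  have e1 : 1/(1+b) + b/(1+b) * (x/b) = (1+x)/(1+b) := by field_simp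
  rw [e1] at hconv
  have := mul_lt_mul_of_pos_left hconv h1b
  calc (1+x) * Real.log ((1+x)/(1+b))
      = (1+b) * ((1+x)/(1+b) * Real.log ((1+x)/(1+b))) := by field_simp
    _ < (1+b) * (b/(1+b) * (x/b * Real.log (x/b))) := this
    _ = x * Real.log (x/b) := by field_simp

lemma tangent_le (x b : ℝ) (hx : 0 ≤ x) (hb : 0 < b) :
    (1+x) * Real.log (1+x) - x * Real.log x ≤
      ((1+b) * Real.log (1+b) - b * Real.log b) + (Real.log (1+b) - Real.log b) * (x - b) := by
  have h1b : (0:ℝ) < 1 + b := by linarith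
  rcases eq_or_lt_of_le hx with h0 | h0
  · simp only [← h0]
    have : 0 < Real.log (1+b) := Real.log_pos (by linarith)
    simp only [add_zero, Real.log_one, mul_one, zero_mul, sub_zero, mul_zero, zero_sub,
      mul_neg, mul_one]
    nlinarith
  · have hc := core_le x b hx hb
    rw [Real.log_div (by linarith) h1b.ne', Real.log_div h0.ne' hb.ne'] at hc
    nlinarith [hc]

lemma tangent_lt (x b : ℝ) (hx : 0 ≤ x) (hb : 0 < b) (hne : x ≠ b) :
    (1+x) * Real.log (1+x) - x * Real.log x <
      ((1+b) * Real.log (1+b) - b * Real.log b) + (Real.log (1+b) - Real.log b) * (x - b) := by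
  have h1b : (0:ℝ) < 1 + b := by linarith
  rcases eq_or_lt_of_le hx with h0 | h0
  · simp only [← h0]
    have : 0 < Real.log (1+b) := Real.log_pos (by linarith)
    simp only [add_zero, Real.log_one, mul_one, zero_mul, sub_zero, mul_zero, zero_sub,
      mul_neg, mul_one]
    nlinarith
  · have hc := core_lt x b hx hb hne
    rw [Real.log_div (by linarith) h1b.ne', Real.log_div h0.ne' hb.ne'] at hc
    nlinarith [hc]

lemma Bose_pos_log (t : ℝ) (ht : 0 < t) :
    0 < (Real.exp t - 1)⁻¹ ∧
      Real.log (1 + (Real.exp t - 1)⁻¹) - Real.log ((Real.exp t - 1)⁻¹) = t := by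
  have h1 : 0 < Real.exp t - 1 := by nlinarith [Real.add_one_le_exp t]
  refine ⟨inv_pos.2 h1, ?_⟩
  have e1 : 1 + (Real.exp t - 1)⁻¹ = Real.exp t / (Real.exp t - 1) := by field_simp; ring
  rw [e1, Real.log_div (Real.exp_ne_zero t) h1.ne', Real.log_inv, Real.log_exp]
  ring

theorem quantum_entropy_inequality (d : ℕ) (a : ℝ) (ha : 0 ≤ a)
    (ω : Torus d → ℝ) (hω : Measurable ω) (hrange : ∀ p, ω p ∈ Icc a 1)
    (μ ν : ℝ) (hadm : ∀ p, 0 ≤ μ * ω p + ν) (hpos : ∀ᵐ p, 0 < μ * ω p + ν)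
    (hB : Integrable (fun p => (Real.exp (μ * ω p + ν) - 1)⁻¹))
    (hωB : Integrable (fun p => ω p * (Real.exp (μ * ω p + ν) - 1)⁻¹))
    (hHB : Integrable (fun p =>
      (1 + (Real.exp (μ * ω p + ν) - 1)⁻¹) * Real.log (1 + (Real.exp (μ * ω p + ν) - 1)⁻¹)
        - (Real.exp (μ * ω p + ν) - 1)⁻¹ * Real.log ((Real.exp (μ * ω p + ν) - 1)⁻¹)))
    (lam : Measure (Torus d)) [IsFiniteMeasure lam]
    (f : Torus d → ℝ) (hfm : Measurable f) (hf : ∀ᵐ p, 0 ≤ f p) (hfi : Integrable f)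
    (hHf : Integrable (fun p => (1 + f p) * Real.log (1 + f p) - f p * Real.log (f p)))
    (lams : Measure (Torus d)) (hsing : Measure.MutuallySingular lams volume)
    (hdecomp : lam = volume.withDensity (fun p => ENNReal.ofReal (f p)) + lams)
    (M₀ E₀ : ℝ) (hM : (lam univ).toReal = M₀) (hE : (∫ p, ω p ∂lam) = E₀) :
    (∫ p, (1 + f p) * Real.log (1 + f p) - f p * Real.log (f p)) ≤
      (∫ p, (1 + (Real.exp (μ * ω p + ν) - 1)⁻¹) * Real.log (1 + (Real.exp (μ * ω p + ν) - 1)⁻¹)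
        - (Real.exp (μ * ω p + ν) - 1)⁻¹ * Real.log ((Real.exp (μ * ω p + ν) - 1)⁻¹)) +
      μ * (E₀ - ∫ p, ω p * (Real.exp (μ * ω p + ν) - 1)⁻¹) +
      ν * (M₀ - ∫ p, (Real.exp (μ * ω p + ν) - 1)⁻¹) ∧
    ((∫ p, (1 + f p) * Real.log (1 + f p) - f p * Real.log (f p)) =
      (∫ p, (1 + (Real.exp (μ * ω p + ν) - 1)⁻¹) * Real.log (1 + (Real.exp (μ * ω p + ν) - 1)⁻¹)
        - (Real.exp (μ * ω p + ν) - 1)⁻¹ * Real.log ((Real.exp (μ * ω p + ν) - 1)⁻¹)) +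
      μ * (E₀ - ∫ p, ω p * (Real.exp (μ * ω p + ν) - 1)⁻¹) +
      ν * (M₀ - ∫ p, (Real.exp (μ * ω p + ν) - 1)⁻¹) →
      f =ᵐ[volume] fun p => (Real.exp (μ * ω p + ν) - 1)⁻¹) := by
  classical
  have hgm : Measurable (fun p : Torus d => μ * ω p + ν) := (hω.const_mul μ).add_const ν
  have hωbd : ∀ p, |ω p| ≤ 1 := fun p =>
    abs_le.2 ⟨by linarith [(hrange p).1, (hrange p).2], (hrange p).2⟩
  have hωf : Integrable (fun p => ω p * f p) := by
    refine hfi.abs.mono' ((hω.mul hfm).aestronglyMeasurable) ?_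
    filter_upwards with p
    rw [norm_mul]
    calc ‖ω p‖ * ‖f p‖ ≤ 1 * ‖f p‖ :=
          mul_le_mul_of_nonneg_right (by simpa using hωbd p) (norm_nonneg _)
      _ = |f p| := by rw [one_mul, Real.norm_eq_abs]
  have hgf : Integrable (fun p => (μ * ω p + ν) * f p) := by
    refine ((hωf.const_mul μ).add (hfi.const_mul ν)).congr ?_
    filter_upwards with p
    simp only [Pi.add_apply]; ring
  have hgB : Integrable (fun p => (μ * ω p + ν) * (Real.exp (μ * ω p + ν) - 1)⁻¹) := by
    refine ((hωB.const_mul μ).add (hB.const_mul ν)).congr ?_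
    filter_upwards with p
    simp only [Pi.add_apply]; ring
  -- the nonnegative defect function
  have hDi : Integrable (fun p =>
      ((1 + (Real.exp (μ * ω p + ν) - 1)⁻¹) * Real.log (1 + (Real.exp (μ * ω p + ν) - 1)⁻¹)
        - (Real.exp (μ * ω p + ν) - 1)⁻¹ * Real.log ((Real.exp (μ * ω p + ν) - 1)⁻¹))
      + (μ * ω p + ν) * f p - (μ * ω p + ν) * (Real.exp (μ * ω p + ν) - 1)⁻¹
      - ((1 + f p) * Real.log (1 + f p) - f p * Real.log (f p))) := by
    exact ((hHB.add hgf).sub hgB).sub hHf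
  have hDnn : ∀ᵐ p ∂(volume : Measure (Torus d)), 0 ≤
      ((1 + (Real.exp (μ * ω p + ν) - 1)⁻¹) * Real.log (1 + (Real.exp (μ * ω p + ν) - 1)⁻¹)
        - (Real.exp (μ * ω p + ν) - 1)⁻¹ * Real.log ((Real.exp (μ * ω p + ν) - 1)⁻¹))
      + (μ * ω p + ν) * f p - (μ * ω p + ν) * (Real.exp (μ * ω p + ν) - 1)⁻¹
      - ((1 + f p) * Real.log (1 + f p) - f p * Real.log (f p)) := by
    filter_upwards [hpos, hf] with p hp hfp
    obtain ⟨hBpos, hBlog⟩ := Bose_pos_log (μ * ω p + ν) hp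
    have h := tangent_le (f p) ((Real.exp (μ * ω p + ν) - 1)⁻¹) hfp hBpos
    rw [hBlog] at h
    nlinarith [h]
  have hDi2 : Integrable (fun p =>
      ((1 + (Real.exp (μ * ω p + ν) - 1)⁻¹) * Real.log (1 + (Real.exp (μ * ω p + ν) - 1)⁻¹)
        - (Real.exp (μ * ω p + ν) - 1)⁻¹ * Real.log ((Real.exp (μ * ω p + ν) - 1)⁻¹))
      + (μ * ω p + ν) * f p - (μ * ω p + ν) * (Real.exp (μ * ω p + ν) - 1)⁻¹) := by
    exact (hHB.add hgf).sub hgB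
  have hDi3 : Integrable (fun p =>
      ((1 + (Real.exp (μ * ω p + ν) - 1)⁻¹) * Real.log (1 + (Real.exp (μ * ω p + ν) - 1)⁻¹)
        - (Real.exp (μ * ω p + ν) - 1)⁻¹ * Real.log ((Real.exp (μ * ω p + ν) - 1)⁻¹))
      + (μ * ω p + ν) * f p) := hHB.add hgf
  have hDint : (∫ p, (((1 + (Real.exp (μ * ω p + ν) - 1)⁻¹) *
        Real.log (1 + (Real.exp (μ * ω p + ν) - 1)⁻¹)
        - (Real.exp (μ * ω p + ν) - 1)⁻¹ * Real.log ((Real.exp (μ * ω p + ν) - 1)⁻¹))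
      + (μ * ω p + ν) * f p - (μ * ω p + ν) * (Real.exp (μ * ω p + ν) - 1)⁻¹
      - ((1 + f p) * Real.log (1 + f p) - f p * Real.log (f p)))) =
      (∫ p, (1 + (Real.exp (μ * ω p + ν) - 1)⁻¹) * Real.log (1 + (Real.exp (μ * ω p + ν) - 1)⁻¹)
        - (Real.exp (μ * ω p + ν) - 1)⁻¹ * Real.log ((Real.exp (μ * ω p + ν) - 1)⁻¹))
      + (∫ p, (μ * ω p + ν) * f p)
      - (∫ p, (μ * ω p + ν) * (Real.exp (μ * ω p + ν) - 1)⁻¹)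
      - (∫ p, (1 + f p) * Real.log (1 + f p) - f p * Real.log (f p)) := by
    rw [integral_sub hDi2 hHf, integral_sub hDi3 hgB, integral_add hHB hgf]
  have hDnonneg : 0 ≤ ∫ p, (((1 + (Real.exp (μ * ω p + ν) - 1)⁻¹) *
        Real.log (1 + (Real.exp (μ * ω p + ν) - 1)⁻¹)
        - (Real.exp (μ * ω p + ν) - 1)⁻¹ * Real.log ((Real.exp (μ * ω p + ν) - 1)⁻¹))
      + (μ * ω p + ν) * f p - (μ * ω p + ν) * (Real.exp (μ * ω p + ν) - 1)⁻¹
      - ((1 + f p) * Real.log (1 + f p) - f p * Real.log (f p))) :=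
    integral_nonneg_of_ae hDnn
  -- finiteness of the pieces
  haveI hfin_s : IsFiniteMeasure lams :=
    isFiniteMeasure_of_le lam (hdecomp ▸ Measure.le_add_left le_rfl)
  haveI hfin_w : IsFiniteMeasure (volume.withDensity (fun p => ENNReal.ofReal (f p))) :=
    isFiniteMeasure_of_le lam (hdecomp ▸ Measure.le_add_right le_rfl)
  have hgbd : ∀ p : Torus d, ‖μ * ω p + ν‖ ≤ |μ| + |ν| := by
    intro p
    rw [Real.norm_eq_abs]
    calc |μ * ω p + ν| ≤ |μ * ω p| + |ν| := abs_add_le _ _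
      _ = |μ| * |ω p| + |ν| := by rw [abs_mul]
      _ ≤ |μ| * 1 + |ν| := by
          have := mul_le_mul_of_nonneg_left (hωbd p) (abs_nonneg μ); linarith
      _ = |μ| + |ν| := by ring
  have hgint_w : Integrable (fun p => μ * ω p + ν)
      (volume.withDensity (fun p => ENNReal.ofReal (f p))) :=
    (integrable_const (|μ| + |ν|)).mono' hgm.aestronglyMeasurable (Eventually.of_forall hgbd)
  have hgint_s : Integrable (fun p => μ * ω p + ν) lams :=
    (integrable_const (|μ| + |ν|)).mono' hgm.aestronglyMeasurable (Eventually.of_forall hgbd)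
  have hωint : Integrable ω lam := by
    refine (integrable_const (1:ℝ)).mono' hω.aestronglyMeasurable ?_
    filter_upwards with p
    simpa using hωbd p
  have hglam : ∫ p, (μ * ω p + ν) ∂lam = μ * E₀ + ν * M₀ := by
    rw [integral_add (hωint.const_mul μ) (integrable_const ν),
      integral_const_mul, hE, integral_const, smul_eq_mul, measureReal_def, hM]
    ring
  have hwd : ∫ p, (μ * ω p + ν) ∂(volume.withDensity (fun p => ENNReal.ofReal (f p))) =
      ∫ p, (μ * ω p + ν) * f p := by
    have h1 : (fun p : Torus d => ENNReal.ofReal (f p)) = fun p => ((f p).toNNReal : ℝ≥0∞) := rfl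
    rw [h1, integral_withDensity_eq_integral_smul hfm.real_toNNReal
      (fun p => μ * ω p + ν)]
    refine integral_congr_ae ?_
    filter_upwards [hf] with p hfp
    simp [NNReal.smul_def, Real.coe_toNNReal _ hfp]; ring
  have hgf_le : ∫ p, (μ * ω p + ν) * f p ≤ μ * E₀ + ν * M₀ := by
    have hsplit : ∫ p, (μ * ω p + ν) ∂lam =
        (∫ p, (μ * ω p + ν) ∂(volume.withDensity (fun p => ENNReal.ofReal (f p))))
        + ∫ p, (μ * ω p + ν) ∂lams := by
      rw [hdecomp]
      exact integral_add_measure hgint_w hgint_s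
    have hnn : 0 ≤ ∫ p, (μ * ω p + ν) ∂lams := integral_nonneg hadm
    rw [hglam, hwd] at hsplit
    linarith
  have hgBsplit : ∫ p, (μ * ω p + ν) * (Real.exp (μ * ω p + ν) - 1)⁻¹ =
      μ * (∫ p, ω p * (Real.exp (μ * ω p + ν) - 1)⁻¹)
      + ν * (∫ p, (Real.exp (μ * ω p + ν) - 1)⁻¹) := by
    have h1 : (fun p : Torus d => (μ * ω p + ν) * (Real.exp (μ * ω p + ν) - 1)⁻¹) =
        fun p => μ * (ω p * (Real.exp (μ * ω p + ν) - 1)⁻¹)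
          + ν * (Real.exp (μ * ω p + ν) - 1)⁻¹ := by
      funext p; ring
    rw [h1, integral_add (hωB.const_mul μ) (hB.const_mul ν), integral_const_mul,
      integral_const_mul]
  have hmain : (∫ p, (1 + f p) * Real.log (1 + f p) - f p * Real.log (f p)) ≤
      (∫ p, (1 + (Real.exp (μ * ω p + ν) - 1)⁻¹) * Real.log (1 + (Real.exp (μ * ω p + ν) - 1)⁻¹)
        - (Real.exp (μ * ω p + ν) - 1)⁻¹ * Real.log ((Real.exp (μ * ω p + ν) - 1)⁻¹)) +
      μ * (E₀ - ∫ p, ω p * (Real.exp (μ * ω p + ν) - 1)⁻¹) +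
      ν * (M₀ - ∫ p, (Real.exp (μ * ω p + ν) - 1)⁻¹) := by
    rw [hDint] at hDnonneg
    nlinarith [hDnonneg, hgf_le, hgBsplit]
  refine ⟨hmain, ?_⟩
  intro heq
  have hDzero : ∫ p, (((1 + (Real.exp (μ * ω p + ν) - 1)⁻¹) *
        Real.log (1 + (Real.exp (μ * ω p + ν) - 1)⁻¹)
        - (Real.exp (μ * ω p + ν) - 1)⁻¹ * Real.log ((Real.exp (μ * ω p + ν) - 1)⁻¹))
      + (μ * ω p + ν) * f p - (μ * ω p + ν) * (Real.exp (μ * ω p + ν) - 1)⁻¹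
      - ((1 + f p) * Real.log (1 + f p) - f p * Real.log (f p))) = 0 := by
    rw [hDint]
    nlinarith [hDnonneg, hDint, hgf_le, hgBsplit, heq]
  have hDae := (integral_eq_zero_iff_of_nonneg_ae hDnn hDi).1 hDzero
  filter_upwards [hpos, hf, hDae] with p hp hfp hD0
  by_contra hne
  obtain ⟨hBpos, hBlog⟩ := Bose_pos_log (μ * ω p + ν) hp
  have h := tangent_lt (f p) ((Real.exp (μ * ω p + ν) - 1)⁻¹) hfp hBpos hne
  rw [hBlog] at h
  simp only [Pi.zero_apply] at hD0
  nlinarith [h, hD0]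
end
end
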